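/- For n ≥ 1, the number of plane trees with n edges and k old leaves is (2^(n-2k+1)/k)·C(n-1,2k-2)·C(2k-2,k-1). -/

import Mathlib

/-- A plane tree: a root together with an ordered (possibly empty) list of subtrees. -/
inductive PlaneTree where
  | node : List PlaneTree → PlaneTree

namespace PlaneTree

/-- The number of edges of a plane tree. -/
def edges : PlaneTree → ℕ
  | node ts => (ts.attach.map (fun t => edges t.1 + 1)).sum
decreasing_by have := List.sizeOf_lt_of_mem t.2; simp at *; omega

/-- Indicator that a tree is a single vertex (i.e. the corresponding child is a leaf). -/
def isLeafInd : PlaneTree → ℕ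
  | node [] => 1
  | node (_ :: _) => 0

/-- The number of old leaves: leaves that are the leftmost child of their parent. -/
def oldLeaves : PlaneTree → ℕ
  | node [] => 0
  | node (t :: ts) =>
      isLeafInd t + oldLeaves t + (ts.attach.map (fun s => oldLeaves s.1)).sum
decreasing_by
  · simp; omega
  · have := List.sizeOf_lt_of_mem s.2; simp at *; omega

/-- The number of young leaves: leaves that are not the leftmost child of their parent. -/
def youngLeaves : PlaneTree → ℕ
  | node [] => 0
  | node (t :: ts) =>
      youngLeaves t + (ts.attach.map (fun s => isLeafInd s.1 + youngLeaves s.1)).sum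
decreasing_by
  · simp; omega
  · have := List.sizeOf_lt_of_mem s.2; simp at *; omega

end PlaneTree


/-!
Removing the rightmost subtree of the root splits a tree with `n + 1` edges into two trees with
`n` edges in total, and for `n ≥ 1` their old leaves add up; the tree with one edge has one old
leaf. So the generating function `T(x, y)` of trees by edges and old leaves satisfies
`T = 1 + x (y - 1) + x T²`, which determines it. The series `1 + x y H` with
`H = ∑ 2^(m - 2j) C(m, 2j) Cat(j) x^m y^j` satisfies the same equation because
`H = 1 + 2 x H + x² y H²`; coefficientwise this is Pascal's rule combined with the Catalan
recurrence and `∑_{i + i' = m} C(i, a) C(i', b) = C(m + 1, a + b + 1)`.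
-/

open Finset

theorem Nat.sum_antidiagonal_choose_mul_choose (m a b : ℕ) :
    ∑ p ∈ antidiagonal m, p.1.choose a * p.2.choose b = (m + 1).choose (a + b + 1) := by
  induction m generalizing b with
  | zero =>
    rcases Nat.eq_zero_or_pos (a + b) with h | h
    · simp [Nat.add_eq_zero_iff.1 h]
    · simp [Nat.choose_eq_zero_of_lt (show 1 < a + b + 1 by omega), Nat.choose_eq_zero_iff]
      omega
  | succ m ih =>
    rw [Nat.sum_antidiagonal_succ']
    rcases b with _ | b
    · have ih₀ := ih 0
      simp only [Nat.choose_zero_right, mul_one, add_zero] at ih₀ ⊢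
      rw [ih₀, Nat.choose_succ_succ' (m + 1) a]
    · simp only [Nat.choose_succ_succ' _ b, mul_add, sum_add_distrib, ih, Nat.choose_zero_succ,
        mul_zero, zero_add]
      rw [show a + (b + 1) + 1 = a + b + 1 + 1 by ring, Nat.choose_succ_succ' (m + 1)]

theorem Nat.card_subtype_eq_and {α : Type*} (a : α) (P : α → Prop) [Decidable (P a)] :
    Nat.card {x // x = a ∧ P x} = if P a then 1 else 0 := by
  split_ifs with h
  · exact Nat.card_eq_one_iff_unique.2
      ⟨⟨fun x y => Subtype.ext (x.2.1.trans y.2.1.symm)⟩, ⟨⟨a, rfl, h⟩⟩⟩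
  · exact Nat.card_eq_zero.2 (Or.inl ⟨fun x => h (x.2.1 ▸ x.2.2)⟩)

def pairsWithSumsEquiv {α : Type*} (f g : α → ℕ) (n k : ℕ) :
    {x : α × α // f x.1 + f x.2 = n ∧ g x.1 + g x.2 = k} ≃
      Σ p : antidiagonal n, Σ q : antidiagonal k,
        {a // f a = p.1.1 ∧ g a = q.1.1} × {b // f b = p.1.2 ∧ g b = q.1.2} where
  toFun x := ⟨⟨(f x.1.1, f x.1.2), by simpa using x.2.1⟩,
    ⟨(g x.1.1, g x.1.2), by simpa using x.2.2⟩, ⟨x.1.1, rfl, rfl⟩, ⟨x.1.2, rfl, rfl⟩⟩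
  invFun y := ⟨(y.2.2.1, y.2.2.2), by
    obtain ⟨⟨p, hp⟩, ⟨q, hq⟩, ⟨a, ha, ha'⟩, ⟨b, hb, hb'⟩⟩ := y
    simp only [HasAntidiagonal.mem_antidiagonal] at hp hq
    simp [*]⟩
  left_inv _ := rfl
  right_inv := by
    rintro ⟨⟨⟨p₁, p₂⟩, hp⟩, ⟨⟨q₁, q₂⟩, hq⟩, ⟨a, ha₁, ha₂⟩, ⟨b, hb₁, hb₂⟩⟩
    dsimp only at ha₁ ha₂ hb₁ hb₂
    subst ha₁ ha₂ hb₁ hb₂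
    rfl

theorem Nat.card_pairsWithSums {α : Type*} (f g : α → ℕ) (n k : ℕ)
    [∀ i j, Finite {a // f a = i ∧ g a = j}] :
    Nat.card {x : α × α // f x.1 + f x.2 = n ∧ g x.1 + g x.2 = k} =
      ∑ p ∈ antidiagonal n, ∑ q ∈ antidiagonal k,
        Nat.card {a // f a = p.1 ∧ g a = q.1} * Nat.card {a // f a = p.2 ∧ g a = q.2} := by
  rw [Nat.card_congr (pairsWithSumsEquiv f g n k), Nat.card_sigma,
    ← sum_coe_sort (antidiagonal n)]
  refine sum_congr rfl fun p _ => ?_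
  rw [Nat.card_sigma, ← sum_coe_sort (antidiagonal k)]
  simp only [Nat.card_prod]

namespace PowerSeries

variable {R : Type*}

theorem coeff_coeff_mul [Semiring R] (F G : R⟦X⟧⟦X⟧) (n k : ℕ) :
    coeff k (coeff n (F * G)) = ∑ p ∈ antidiagonal n, ∑ q ∈ antidiagonal k,
      coeff q.1 (coeff p.1 F) * coeff q.2 (coeff p.2 G) := by
  simp only [coeff_mul, map_sum]

theorem eq_of_eq_add_X_mul_sq [Semiring R] {a F G : R⟦X⟧} (hF : F = a + X * F ^ 2)
    (hG : G = a + X * G ^ 2) : F = G := by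
  ext n
  induction n using Nat.strong_induction_on with
  | _ n ih =>
    rw [hF, hG]
    rcases n with _ | n
    · simp
    · rw [map_add, map_add, coeff_succ_X_mul, coeff_succ_X_mul, sq, sq, coeff_mul, coeff_mul]
      congr 1
      refine sum_congr rfl fun p hp => ?_
      have h₁ := HasAntidiagonal.antidiagonal.fst_le hp
      have h₂ := HasAntidiagonal.antidiagonal.snd_le hp
      rw [ih p.1 (by omega), ih p.2 (by omega)]

end PowerSeries

namespace PlaneTree

theorem edges_node (ts : List PlaneTree) : edges (node ts) = (ts.map (edges · + 1)).sum := by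
  rw [edges, List.attach_map_val (f := (edges · + 1))]

theorem oldLeaves_node_cons (t : PlaneTree) (ts : List PlaneTree) :
    oldLeaves (node (t :: ts)) = isLeafInd t + oldLeaves t + (ts.map oldLeaves).sum := by
  rw [oldLeaves, List.attach_map_val (f := oldLeaves)]

theorem edges_eq_zero_iff {T : PlaneTree} : edges T = 0 ↔ T = node [] := by
  obtain ⟨ts⟩ := T
  cases ts <;> simp [edges_node]

theorem isLeafInd_of_ne {t : PlaneTree} (h : t ≠ node []) : isLeafInd t = 0 := by
  obtain ⟨_ | _⟩ := t
  · exact absurd rfl h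
  · rfl

def graft : PlaneTree → PlaneTree → PlaneTree
  | node ts, t => node (ts ++ [t])

theorem edges_graft (T t : PlaneTree) : edges (graft T t) = edges T + edges t + 1 := by
  obtain ⟨ts⟩ := T
  simp only [graft, edges_node, List.map_append, List.sum_append, List.map_singleton,
    List.sum_singleton]
  ring

/-- The exception is `graft (node []) (node []) = node [node []]`, which has one old leaf. -/
theorem oldLeaves_graft {T t : PlaneTree} (h : edges T + edges t ≠ 0) :
    oldLeaves (graft T t) = oldLeaves T + oldLeaves t := by
  obtain ⟨_ | ⟨u, us⟩⟩ := T
  · have ht : t ≠ node [] := by simpa [edges_eq_zero_iff] using h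
    simp [graft, oldLeaves_node_cons, isLeafInd_of_ne ht, oldLeaves]
  · simp only [graft, List.cons_append, oldLeaves_node_cons, List.map_append, List.sum_append,
      List.map_singleton, List.sum_singleton]
    ring

theorem graft_injective : Function.Injective (Function.uncurry graft) := by
  rintro ⟨⟨ts⟩, t⟩ ⟨⟨us⟩, u⟩ h
  simp_all [graft, List.append_singleton_inj]

theorem exists_graft {T : PlaneTree} (h : T ≠ node []) : ∃ T' t, graft T' t = T := by
  obtain ⟨ts⟩ := T
  obtain rfl | ⟨us, u, rfl⟩ := ts.eq_nil_or_concat'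
  · exact absurd rfl h
  · exact ⟨node us, u, rfl⟩

theorem edges_eq_one_iff {T : PlaneTree} : edges T = 1 ↔ T = node [node []] := by
  constructor
  · intro h
    obtain ⟨T', t, rfl⟩ := exists_graft (T := T) (by rintro rfl; simp [edges_node] at h)
    rw [edges_graft, Nat.add_eq_right, Nat.add_eq_zero_iff, edges_eq_zero_iff,
      edges_eq_zero_iff] at h
    rw [h.1, h.2]
    rfl
  · rintro rfl
    simp [edges_node]

theorem finite_setOf_edges_eq (n : ℕ) : {T : PlaneTree | edges T = n}.Finite := by
  induction n using Nat.strong_induction_on with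
  | _ n ih =>
    rcases n with _ | n
    · simp [edges_eq_zero_iff]
    · refine ((antidiagonal n).finite_toSet.biUnion fun p hp =>
        (ih p.1 ?_).image2 graft (ih p.2 ?_)).subset ?_
      · have := HasAntidiagonal.antidiagonal.fst_le hp; omega
      · have := HasAntidiagonal.antidiagonal.snd_le hp; omega
      · intro T hT
        obtain ⟨T', t, rfl⟩ := exists_graft (T := T) (by rintro rfl; simp [edges_node] at hT)
        simp only [Set.mem_ofPred_eq, edges_graft] at hT
        exact Set.mem_biUnion (x := (edges T', edges t)) (by simpa using hT)
          (Set.mem_image2_of_mem rfl rfl)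

instance (n k : ℕ) : Finite {T : PlaneTree // T.edges = n ∧ T.oldLeaves = k} :=
  ((finite_setOf_edges_eq n).subset fun _ h => h.1).to_subtype

noncomputable def cardOld (n k : ℕ) : ℕ :=
  Nat.card {T : PlaneTree // T.edges = n ∧ T.oldLeaves = k}

theorem cardOld_zero (k : ℕ) : cardOld 0 k = if k = 0 then 1 else 0 := by
  simp only [cardOld, edges_eq_zero_iff]
  rw [Nat.card_subtype_eq_and]
  simp [oldLeaves, eq_comm]

theorem cardOld_one (k : ℕ) : cardOld 1 k = if k = 1 then 1 else 0 := by
  simp only [cardOld, edges_eq_one_iff]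
  rw [Nat.card_subtype_eq_and]
  simp [oldLeaves_node_cons, isLeafInd, oldLeaves, eq_comm]

theorem cardOld_succ {n : ℕ} (hn : n ≠ 0) (k : ℕ) :
    cardOld (n + 1) k = ∑ p ∈ antidiagonal n, ∑ q ∈ antidiagonal k,
      cardOld p.1 q.1 * cardOld p.2 q.2 := by
  let e : {x : PlaneTree × PlaneTree //
      edges x.1 + edges x.2 = n ∧ oldLeaves x.1 + oldLeaves x.2 = k} ≃
      {T : PlaneTree // T.edges = n + 1 ∧ T.oldLeaves = k} :=
    Equiv.ofBijective (fun x => ⟨graft x.1.1 x.1.2, by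
        rw [edges_graft, oldLeaves_graft (by omega), x.2.1, x.2.2]; simp⟩)
      ⟨fun x y h => Subtype.ext (graft_injective (congrArg Subtype.val h)), by
        rintro ⟨T, hE, hO⟩
        obtain ⟨T', t, rfl⟩ := exists_graft (T := T) (by rintro rfl; simp [edges_node] at hE)
        rw [edges_graft] at hE
        rw [oldLeaves_graft (by omega)] at hO
        exact ⟨⟨(T', t), Nat.add_right_cancel hE, hO⟩, rfl⟩⟩
  rw [cardOld, ← Nat.card_congr e, Nat.card_pairsWithSums]
  rfl

/-- The claimed number of trees with `m + 1` edges and `j + 1` old leaves; the integer exponent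
avoids truncated subtraction. -/
def oldLeavesFormula (m j : ℕ) : ℚ := 2 ^ ((m : ℤ) - 2 * j) * m.choose (2 * j) * catalan j

theorem oldLeavesFormula_zero (j : ℕ) : oldLeavesFormula 0 j = if j = 0 then 1 else 0 := by
  rcases j with _ | j
  · simp [oldLeavesFormula]
  · simp [oldLeavesFormula, Nat.choose_eq_zero_of_lt (show 0 < 2 * (j + 1) by omega)]

theorem oldLeavesFormula_one (j : ℕ) : oldLeavesFormula 1 j = 2 * oldLeavesFormula 0 j := by
  rcases j with _ | j
  · simp [oldLeavesFormula]
  · simp [oldLeavesFormula, Nat.choose_eq_zero_of_lt (show 1 < 2 * (j + 1) by omega),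
      Nat.choose_eq_zero_of_lt (show 0 < 2 * (j + 1) by omega)]

theorem oldLeavesFormula_succ_zero (m : ℕ) :
    oldLeavesFormula (m + 1) 0 = 2 * oldLeavesFormula m 0 := by
  simp [oldLeavesFormula, zpow_add_one₀, mul_comm]

theorem sum_oldLeavesFormula_mul (m j : ℕ) :
    ∑ p ∈ antidiagonal m, ∑ q ∈ antidiagonal j,
      oldLeavesFormula p.1 q.1 * oldLeavesFormula p.2 q.2 =
        2 ^ ((m : ℤ) - 2 * j) * (m + 1).choose (2 * j + 1) * catalan (j + 1) := by
  have hterm : ∀ p ∈ antidiagonal m, ∀ q ∈ antidiagonal j,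
      oldLeavesFormula p.1 q.1 * oldLeavesFormula p.2 q.2 = 2 ^ ((m : ℤ) - 2 * j) *
        (catalan q.1 * catalan q.2 * (p.1.choose (2 * q.1) * p.2.choose (2 * q.2)) : ℕ) := by
    intro p hp q hq
    rw [HasAntidiagonal.mem_antidiagonal] at hp hq
    rw [← hp, ← hq, oldLeavesFormula, oldLeavesFormula]
    push_cast
    rw [show (p.1 : ℤ) + p.2 - 2 * (q.1 + q.2) = ((p.1 : ℤ) - 2 * q.1) + ((p.2 : ℤ) - 2 * q.2) by
      ring, zpow_add₀ two_ne_zero]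
    ring
  have hcount : ∑ q ∈ antidiagonal j, ∑ p ∈ antidiagonal m,
      catalan q.1 * catalan q.2 * (p.1.choose (2 * q.1) * p.2.choose (2 * q.2)) =
        (m + 1).choose (2 * j + 1) * catalan (j + 1) := by
    rw [catalan_succ', mul_sum]
    refine sum_congr rfl fun q hq => ?_
    rw [← mul_sum, Nat.sum_antidiagonal_choose_mul_choose, ← mul_add,
      HasAntidiagonal.mem_antidiagonal.1 hq, mul_comm]
  rw [sum_congr rfl fun p hp => sum_congr rfl (hterm p hp), sum_comm]
  simp only [← mul_sum]
  rw [mul_assoc, ← Nat.cast_mul, ← hcount]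
  simp only [Nat.cast_sum]

theorem oldLeavesFormula_succ_succ (m j : ℕ) :
    oldLeavesFormula (m + 2) (j + 1) = 2 * oldLeavesFormula (m + 1) (j + 1) +
      ∑ p ∈ antidiagonal m, ∑ q ∈ antidiagonal j,
        oldLeavesFormula p.1 q.1 * oldLeavesFormula p.2 q.2 := by
  rw [sum_oldLeavesFormula_mul, oldLeavesFormula, oldLeavesFormula,
    show 2 * (j + 1) = 2 * j + 1 + 1 by ring, Nat.choose_succ_succ' (m + 1)]
  have h₁ : ((m + 2 : ℕ) : ℤ) - 2 * ((j + 1 : ℕ) : ℤ) = (m : ℤ) - 2 * j := by push_cast; ring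
  have h₂ : ((m + 1 : ℕ) : ℤ) - 2 * ((j + 1 : ℕ) : ℤ) = (m : ℤ) - 2 * j - 1 := by push_cast; ring
  rw [h₁, h₂, zpow_sub_one₀ two_ne_zero]
  push_cast
  field_simp
  ring

theorem oldLeavesFormula_eq (m j : ℕ) :
    oldLeavesFormula m j = 2 ^ (m - 2 * j) / (j + 1) * m.choose (2 * j) * (2 * j).choose j := by
  have hcatalan : ((2 * j).choose j : ℚ) = (j + 1) * catalan j := by
    rw [← Nat.centralBinom_eq_two_mul_choose, ← succ_mul_catalan_eq_centralBinom]
    push_cast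
    ring
  rw [oldLeavesFormula, hcatalan]
  rcases le_or_gt (2 * j) m with h | h
  · rw [show (m : ℤ) - 2 * j = ((m - 2 * j : ℕ) : ℤ) by push_cast [h]; ring, zpow_natCast]
    field_simp
  · simp [Nat.choose_eq_zero_of_lt h]

open PowerSeries

/-- The outer variable counts edges, the inner one (`C X` below) old leaves. -/
noncomputable def oldLeavesGF : ℚ⟦X⟧⟦X⟧ := mk fun n => mk fun k => (cardOld n k : ℚ)

noncomputable def formulaGF : ℚ⟦X⟧⟦X⟧ := mk fun m => mk (oldLeavesFormula m)

theorem formulaGF_eq : formulaGF = 1 + 2 * X * formulaGF + X ^ 2 * C X * formulaGF ^ 2 := by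
  rw [show (1 : ℚ⟦X⟧⟦X⟧) + 2 * X * formulaGF + X ^ 2 * C X * formulaGF ^ 2 =
    1 + X * (formulaGF + formulaGF + X * (C X * (formulaGF * formulaGF))) by ring]
  refine ext fun m => ext fun j => ?_
  simp only [formulaGF, coeff_mk, map_add, coeff_one]
  rcases m with _ | _ | m
  · simp [oldLeavesFormula_zero]
  · simp [oldLeavesFormula_one, two_mul]
  · rcases j with _ | j
    · simp [oldLeavesFormula_succ_zero, two_mul]
    · simp [coeff_coeff_mul, oldLeavesFormula_succ_succ, two_mul]

theorem oldLeavesGF_eq : oldLeavesGF = 1 + X * (C X - 1) + X * oldLeavesGF ^ 2 := by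
  have h₀ : coeff 0 oldLeavesGF = 1 := by
    ext k
    simp [oldLeavesGF, cardOld_zero, coeff_one]
  rw [add_assoc, ← mul_add, sq]
  refine ext fun m => ?_
  rcases m with _ | _ | m
  · simp [h₀]
  · rw [map_add, coeff_succ_X_mul, map_add, map_sub, coeff_zero_C, coeff_zero_one,
      coeff_zero_eq_constantCoeff_apply, map_mul, ← coeff_zero_eq_constantCoeff_apply, h₀]
    ext j
    rcases j with _ | _ | j <;> simp [oldLeavesGF, cardOld_one, coeff_X]
  · ext j
    simp [oldLeavesGF, coeff_coeff_mul, cardOld_succ]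

theorem oldLeavesGF_eq_one_add : oldLeavesGF = 1 + X * C X * formulaGF :=
  eq_of_eq_add_X_mul_sq oldLeavesGF_eq (by linear_combination (X * C X) * formulaGF_eq)

theorem cardOld_succ_succ (m j : ℕ) : (cardOld (m + 1) (j + 1) : ℚ) = oldLeavesFormula m j := by
  have h := congrArg (fun F => coeff (j + 1) (coeff (m + 1) F)) oldLeavesGF_eq_one_add
  simpa [oldLeavesGF, formulaGF, mul_assoc] using h

end PlaneTree

/-- The number of plane trees with `n` edges and `k` old leaves is
`(2^(n-2k+1)/k)·C(n-1,2k-2)·C(2k-2,k-1)`. -/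
theorem card_planeTrees_old (n k : ℕ) (hn : 1 ≤ n) (hk : 1 ≤ k) :
    (Nat.card {T : PlaneTree // T.edges = n ∧ T.oldLeaves = k} : ℚ) =
      (2 ^ (n + 1 - 2 * k) / k) * (n - 1).choose (2 * k - 2) * (2 * k - 2).choose (k - 1) := by
  obtain ⟨m, rfl⟩ := Nat.exists_eq_add_of_le' hn
  obtain ⟨j, rfl⟩ := Nat.exists_eq_add_of_le' hk
  rw [← PlaneTree.cardOld, PlaneTree.cardOld_succ_succ, PlaneTree.oldLeavesFormula_eq,
    show m + 1 + 1 - 2 * (j + 1) = m - 2 * j by omega, show 2 * (j + 1) - 2 = 2 * j by omega]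
  simp
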